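/- Exponential product identity for quadratic Fock-space forms: for self-adjoint operators A, B bounded from above on the one-particle space, there is a self-adjoint C with e^A e^B e^A = e^C, and the second-quantized exponentials satisfy e^{d\Gamma(A)} e^{d\Gamma(B)} e^{d\Gamma(A)} = e^{d\Gamma(C)} on both bosonic and fermionic Fock space. -/

import Mathlib

/-!
The one-particle operator is `C = log (e^A e^B e^A)`, which exists because `e^A e^B e^A` is the
conjugate of the strictly positive `e^B` by the invertible self-adjoint `e^A`.

On Fock space, the relation `[dΓ X, a†(f)] = a†(X f)` gives `‖a†(Y x)‖ ≤ 2 ‖dΓ Y‖ ‖a†(x)‖`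
for every bounded `Y`. A single bounded `Y` can map an orthonormal sequence onto any summable
sequence, so this forces `a†` to be bounded. Exponentiating the relation then yields
`e^{dΓ X} a†(f) = a†(e^X f) e^{dΓ X}`. Hence `e^{dΓ A} e^{dΓ B} e^{dΓ A}` and `e^{dΓ C}` both fix
the vacuum and move creation operators by the same one-particle operator `e^A e^B e^A = e^C`, so
they agree on the dense span of the vectors `a†(f₁) ⋯ a†(fₙ) Ω`.
-/

open NormedSpace InnerProductSpace ContinuousLinearMap

theorem LinearMap.exists_norm_le_lt_norm_apply_of_not_continuous {𝕜 V E : Type*} [RCLike 𝕜]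
    [NormedAddCommGroup V] [NormedSpace 𝕜 V] [NormedAddCommGroup E] [NormedSpace 𝕜 E]
    {T : V →ₗ[𝕜] E} (hT : ¬ Continuous T) {ε : ℝ} (hε : 0 < ε) (M : ℝ) :
    ∃ x, ‖x‖ ≤ ε ∧ M < ‖T x‖ := by
  obtain ⟨x, hx⟩ : ∃ x, M / ε * ‖x‖ < ‖T x‖ := by
    by_contra! h
    exact hT (AddMonoidHomClass.continuous_of_bound T _ h)
  have hx0 : x ≠ 0 := by rintro rfl; simp at hx
  refine ⟨((ε / ‖x‖ : ℝ) : 𝕜) • x, ?_, ?_⟩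
  · rw [norm_smul, RCLike.norm_ofReal, abs_of_nonneg (by positivity),
      div_mul_cancel₀ _ (norm_ne_zero_iff.mpr hx0)]
  · rw [map_smul, norm_smul, RCLike.norm_ofReal, abs_of_nonneg (by positivity)]
    calc M = ε / ‖x‖ * (M / ε * ‖x‖) := by field_simp
      _ < ε / ‖x‖ * ‖T x‖ := by gcongr

section Continuity

variable {𝕜 H : Type*} [RCLike 𝕜] [NormedAddCommGroup H] [InnerProductSpace 𝕜 H] [CompleteSpace H]

theorem exists_orthonormal_nat_of_not_finiteDimensional (hH : ¬ FiniteDimensional 𝕜 H) :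
    ∃ e : ℕ → H, Orthonormal 𝕜 e := by
  obtain ⟨w, b, hb⟩ := exists_hilbertBasis 𝕜 H
  have hw : w.Infinite := fun hw ↦ by
    have := hw.fintype
    exact hH (.of_basis b.toOrthonormalBasis.toBasis)
  refine ⟨Subtype.val ∘ hw.natEmbedding, ?_⟩
  exact (hb ▸ b.orthonormal).comp _ (hw.natEmbedding w).injective

theorem Orthonormal.exists_apply_eq {e : ℕ → H} (he : Orthonormal 𝕜 e) {h : ℕ → H}
    (hh : Summable fun j ↦ ‖h j‖) : ∃ Y : H →L[𝕜] H, ∀ i, Y (e i) = h i := by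
  have hsum : Summable fun j ↦ rankOne 𝕜 (h j) (e j) :=
    .of_norm (by simpa [he.1 _] using hh)
  refine ⟨∑' j, rankOne 𝕜 (h j) (e j), fun i ↦ ?_⟩
  have hi : HasSum (fun j ↦ rankOne 𝕜 (h j) (e j) (e i)) (h i) := by
    convert hasSum_ite_eq i (h i) using 2 with j
    rcases eq_or_ne j i with rfl | hji <;> simp [rankOne_def, orthonormal_iff_ite.mp he, he.1, *]
  exact (hsum.hasSum.mapL (ContinuousLinearMap.apply 𝕜 H (e i))).unique hi

theorem LinearMap.continuous_of_forall_exists_norm_comp_le {E : Type*} [NormedAddCommGroup E]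
    [NormedSpace 𝕜 E] (T : H →ₗ[𝕜] E) (hT : ∀ Y : H →L[𝕜] H, ∃ K, ∀ x, ‖T (Y x)‖ ≤ K * ‖T x‖) :
    Continuous T := by
  by_contra hcont
  obtain ⟨e, he⟩ := exists_orthonormal_nat_of_not_finiteDimensional (𝕜 := 𝕜) (H := H)
    fun _ ↦ hcont T.continuous_of_finiteDimensional
  choose h hh_le hh_gt using fun j : ℕ ↦ T.exists_norm_le_lt_norm_apply_of_not_continuous hcont
    (pow_pos (half_pos one_pos) j) (j * (‖T (e j)‖ + 1))
  obtain ⟨Y, hY⟩ := he.exists_apply_eq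
    (summable_geometric_two.of_nonneg_of_le (fun _ ↦ norm_nonneg _) hh_le)
  obtain ⟨K, hK⟩ := hT Y
  obtain ⟨j, hj⟩ := exists_nat_gt K
  -- `j (‖T eⱼ‖ + 1) < ‖T hⱼ‖ = ‖T (Y eⱼ)‖ ≤ K ‖T eⱼ‖` is impossible once `K < j`.
  have hlt := (hh_gt j).trans_le (hY j ▸ hK (e j))
  nlinarith [norm_nonneg (T (e j)), mul_nonneg (sub_nonneg.2 hj.le) (norm_nonneg (T (e j)))]

theorem LinearMap.continuous_of_commutator_eq {𝔸 : Type*} [NormedRing 𝔸] [NormedSpace 𝕜 𝔸]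
    (T : H →ₗ[𝕜] 𝔸) (D : (H →L[𝕜] H) → 𝔸) (hcomm : ∀ Y x, D Y * T x - T x * D Y = T (Y x)) :
    Continuous T := by
  refine T.continuous_of_forall_exists_norm_comp_le fun Y ↦ ⟨2 * ‖D Y‖, fun x ↦ ?_⟩
  calc ‖T (Y x)‖ = ‖D Y * T x - T x * D Y‖ := by rw [hcomm]
    _ ≤ ‖D Y‖ * ‖T x‖ + ‖T x‖ * ‖D Y‖ :=
      (norm_sub_le _ _).trans (add_le_add (norm_mul_le _ _) (norm_mul_le _ _))
    _ = 2 * ‖D Y‖ * ‖T x‖ := by ring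

end Continuity

section Exponential

variable {𝕜 𝔸 : Type*} [RCLike 𝕜] [NormedRing 𝔸] [NormedAlgebra 𝕜 𝔸] [CompleteSpace 𝔸]

theorem exp_apply_map_one_eq_map_exp {E : Type*} [NormedAddCommGroup E] [NormedSpace 𝕜 E]
    [CompleteSpace E] (P : E →L[𝕜] E) (φ : 𝔸 →L[𝕜] E) (a : 𝔸)
    (h : ∀ n, P (φ (a ^ n)) = φ (a ^ (n + 1))) : exp P (φ 1) = φ (exp a) := by
  have hpow : ∀ n, (P ^ n) (φ 1) = φ (a ^ n) := by
    intro n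
    induction n with
    | zero => simp
    | succ n ih => rw [pow_succ', mul_apply_eq_comp, ih, h]
  have hP := (exp_series_hasSum_exp' (𝕂 := 𝕜) P).mapL (apply 𝕜 E (φ 1))
  have ha := (exp_series_hasSum_exp' (𝕂 := 𝕜) a).mapL φ
  simp only [apply_apply, smul_apply, hpow, ← map_smul] at hP
  exact hP.unique ha

theorem exp_apply_of_apply_eq_zero {E : Type*} [NormedAddCommGroup E] [NormedSpace 𝕜 E]
    [CompleteSpace E] {P : E →L[𝕜] E} {v : E} (hv : P v = 0) : exp P v = v := by
  simpa using exp_apply_map_one_eq_map_exp P (toSpanSingleton 𝕜 v) (0 : 𝕜) (by simp [hv])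

theorem ContinuousLinearMap.exp_mul (D : 𝔸) : exp (mul 𝕜 𝔸 D) = mul 𝕜 𝔸 (exp D) := by
  ext S
  simpa using exp_apply_map_one_eq_map_exp (mul 𝕜 𝔸 D) ((mul 𝕜 𝔸).flip S) D
    (by simp [pow_succ', mul_assoc])

theorem ContinuousLinearMap.exp_flip_mul (D : 𝔸) :
    exp ((mul 𝕜 𝔸).flip D) = (mul 𝕜 𝔸).flip (exp D) := by
  ext S
  simpa using exp_apply_map_one_eq_map_exp ((mul 𝕜 𝔸).flip D) (mul 𝕜 𝔸 S) D
    (by simp [pow_succ, mul_assoc])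

theorem semiconjBy_exp_of_commutator_eq {H : Type*} [NormedAddCommGroup H] [NormedSpace 𝕜 H]
    [CompleteSpace H] (κ : H →L[𝕜] 𝔸) (D : 𝔸) (X : H →L[𝕜] H)
    (hcomm : ∀ f, D * κ f - κ f * D = κ (X f)) (f : H) :
    SemiconjBy (exp D) (κ f) (κ (exp X f)) := by
  -- Split left multiplication `L` by `D` into right multiplication `R` and the commuting `ad D`.
  set L := mul 𝕜 𝔸 D
  set R := (mul 𝕜 𝔸).flip D
  have hRL : Commute R (L - R) := by
    refine .sub_right ?_ (.refl R)
    ext S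
    simp [L, R, mul_assoc]
  have had : exp (L - R) (κ f) = κ (exp X f) := by
    simpa using exp_apply_map_one_eq_map_exp (L - R) (κ.comp (apply 𝕜 H f)) X
      (by simp [L, R, hcomm, pow_succ'])
  calc exp D * κ f = exp (R + (L - R)) (κ f) := by rw [add_sub_cancel, exp_mul]; rfl
    _ = exp R (exp (L - R) (κ f)) := by
      rw [exp_add_of_commute_of_mem_ball (𝕂 := 𝕜) hRL] <;> simp [expSeries_radius_eq_top]
    _ = κ (exp X f) * exp D := by rw [had, exp_flip_mul]; rfl

end Exponential

theorem SemiconjBy.list_prod_map {α M : Type*} [Monoid M] {w : M} {g g' : α → M}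
    (h : ∀ x, SemiconjBy w (g x) (g' x)) (l : List α) :
    SemiconjBy w (l.map g).prod (l.map g').prod := by
  induction l with
  | nil => exact .one_right w
  | cons x l ih => simpa using (h x).mul_right ih

theorem ContinuousLinearMap.eq_of_semiconjBy_of_dense_span {𝕜 H F : Type*} [RCLike 𝕜]
    [NormedAddCommGroup F] [NormedSpace 𝕜 F] (a : H → F →L[𝕜] F) (S : H → H) (Ω : F)
    (hcyclic : Dense (Submodule.span 𝕜
      {v : F | ∃ (n : ℕ) (f : Fin n → H), v = ((List.ofFn fun i => a (f i)).prod) Ω} : Set F))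
    {W W' : F →L[𝕜] F} (hW : ∀ f, SemiconjBy W (a f) (a (S f)))
    (hW' : ∀ f, SemiconjBy W' (a f) (a (S f))) (hΩ : W Ω = W' Ω) : W = W' := by
  refine ext_on hcyclic ?_
  rintro _ ⟨n, f, rfl⟩
  have hprod : ∀ V : F →L[𝕜] F, (∀ f, SemiconjBy V (a f) (a (S f))) →
      V ((List.ofFn fun i => a (f i)).prod Ω) = (List.ofFn fun i => a (S (f i))).prod (V Ω) :=
    fun V hV ↦ by
      simpa [List.map_ofFn, Function.comp_def] using
        congr($((SemiconjBy.list_prod_map hV (.ofFn f)).eq) Ω)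
  rw [hprod W hW, hprod W' hW', hΩ]

theorem isStrictlyPositive_exp_mul_exp_mul_exp {A : Type*} [CStarAlgebra A]
    [PartialOrder A] [StarOrderedRing A] {a b : A} (ha : IsSelfAdjoint a) (hb : IsSelfAdjoint b) :
    IsStrictlyPositive (exp a * exp b * exp a) := by
  have hunit : ∀ x : A, IsUnit (exp x) := fun x ↦
    isUnit_exp_of_mem_ball (𝕂 := ℂ) (by simp [expSeries_radius_eq_top])
  exact .conjugate_of_isUnit_of_isSelfAdjoint _ _ (hunit a) ha.exp
    ((hunit b).isStrictlyPositive hb.exp_nonneg)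

theorem exp_product_identity_second_quantization_general
    {H : Type*} [NormedAddCommGroup H] [InnerProductSpace ℂ H] [CompleteSpace H]
    {F : Type*} [NormedAddCommGroup F] [InnerProductSpace ℂ F] [CompleteSpace F]
    (crea : H →ₗ[ℂ] (F →L[ℂ] F)) (Ω : F)
    (hcyclic : Dense (Submodule.span ℂ
      {v : F | ∃ (n : ℕ) (f : Fin n → H),
        v = ((List.ofFn fun i => crea (f i)).prod) Ω} : Set F))
    (dΓ : (H →L[ℂ] H) →ₗ[ℂ] (F →L[ℂ] F))
    (hvac : ∀ X : H →L[ℂ] H, (dΓ X) Ω = 0)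
    (hcomm : ∀ (X : H →L[ℂ] H) (f : H),
      dΓ X * crea f - crea f * dΓ X = crea (X f))
    (A B : H →L[ℂ] H) (hA : IsSelfAdjoint A) (hB : IsSelfAdjoint B) :
    ∃ C : H →L[ℂ] H, IsSelfAdjoint C ∧
      exp A * exp B * exp A = exp C ∧
      exp (dΓ A) * exp (dΓ B) * exp (dΓ A) = exp (dΓ C) := by
  have hexp_log := CFC.exp_log _ (isStrictlyPositive_exp_mul_exp_mul_exp hA hB)
  set C := CFC.log (exp A * exp B * exp A)
  have hcrea : Continuous crea := crea.continuous_of_commutator_eq dΓ hcomm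
  have hsemi (X : H →L[ℂ] H) (f : H) : SemiconjBy (exp (dΓ X)) (crea f) (crea (exp X f)) :=
    semiconjBy_exp_of_commutator_eq ⟨crea, hcrea⟩ (dΓ X) X (hcomm X) f
  refine ⟨C, .log, hexp_log.symm, ?_⟩
  refine eq_of_semiconjBy_of_dense_span crea ⇑(exp C) Ω hcyclic (fun f ↦ ?_) (hsemi C) ?_
  · rw [hexp_log]
    exact ((hsemi A _).mul_left (hsemi B _)).mul_left (hsemi A f)
  · simp [exp_apply_of_apply_eq_zero (hvac _)]

/-- **Exponential product identity for quadratic Fock-space forms.**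
Let `F` be (bosonic or fermionic) Fock space over the one-particle space `H`,
with creation operators `crea f = a(f)†`, cyclic vacuum `Ω`, and second
quantization `dΓ` characterized by `dΓ(X)Ω = 0` and `[dΓ(X), a(f)†] = a(Xf)†`.
For self-adjoint (bounded) `A`, `B` there is a self-adjoint `C` with
`e^A e^B e^A = e^C` and correspondingly
`e^{dΓ(A)} e^{dΓ(B)} e^{dΓ(A)} = e^{dΓ(C)}`. -/
theorem exp_product_identity_second_quantization
    {H : Type*} [NormedAddCommGroup H] [InnerProductSpace ℂ H] [CompleteSpace H]
    {F : Type*} [NormedAddCommGroup F] [InnerProductSpace ℂ F] [CompleteSpace F]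
    (crea : H →ₗ[ℂ] (F →L[ℂ] F)) (Ω : F) (hΩ : Ω ≠ 0)
    (hcyclic : Dense (Submodule.span ℂ
      {v : F | ∃ (n : ℕ) (f : Fin n → H),
        v = ((List.ofFn fun i => crea (f i)).prod) Ω} : Set F))
    (dΓ : (H →L[ℂ] H) →ₗ[ℂ] (F →L[ℂ] F))
    (hvac : ∀ X : H →L[ℂ] H, (dΓ X) Ω = 0)
    (hcomm : ∀ (X : H →L[ℂ] H) (f : H),
      dΓ X * crea f - crea f * dΓ X = crea (X f))
    (A B : H →L[ℂ] H) (hA : IsSelfAdjoint A) (hB : IsSelfAdjoint B) :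
    ∃ C : H →L[ℂ] H, IsSelfAdjoint C ∧
      exp A * exp B * exp A = exp C ∧
      exp (dΓ A) * exp (dΓ B) * exp (dΓ A) = exp (dΓ C) :=
  exp_product_identity_second_quantization_general crea Ω hcyclic dΓ hvac hcomm A B hA hB
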